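/- (Lemma 2.4, second estimate of (2.10)) There exists a constant C > 0, depending only on d, such that for every integer N ≥ 2, every δ > 0, and every measurable ρ : ℝ^d → ℝ with 0 ≤ ρ, ρ ∈ L¹(ℝ^d) ∩ L^∞(ℝ^d), one has sup_{x ∈ ℝ^d} ∫_{ℝ^d} (L^N(x − y))² ρ(y) dy ≤ C · N^{dδ} · (‖ρ‖_{L¹} + ‖ρ‖_{L^∞}). -/

import Mathlib

open MeasureTheory Classical in
noncomputable def Cstar (d : ℕ) : ℝ :=
  Real.Gamma ((d : ℝ) / 2) / (2 * Real.pi ^ ((d : ℝ) / 2))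

open Classical in
/-- The Newtonian interaction kernel `F(x) = C_* x / |x|^d`, with `F(0) = 0`. -/
noncomputable def newtonF (d : ℕ) (x : EuclideanSpace ℝ (Fin d)) : EuclideanSpace ℝ (Fin d) :=
  if x = 0 then 0 else (Cstar d / ‖x‖ ^ d) • x

/-- The rescaled mollifier `ψ_N(x) = N^{dδ} ψ(N^δ x)`. -/
noncomputable def psiN (d N : ℕ) (δ : ℝ) (ψ : EuclideanSpace ℝ (Fin d) → ℝ)
    (x : EuclideanSpace ℝ (Fin d)) : ℝ :=
  (N : ℝ) ^ ((d : ℝ) * δ) * ψ ((((N : ℝ) ^ δ) : ℝ) • x)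

open MeasureTheory in
/-- The regularized kernel `F^N = F * ψ_N`, i.e. `F^N(x) = ∫ F(x-y) ψ_N(y) dy`. -/
noncomputable def FN (d N : ℕ) (δ : ℝ) (ψ : EuclideanSpace ℝ (Fin d) → ℝ)
    (x : EuclideanSpace ℝ (Fin d)) : EuclideanSpace ℝ (Fin d) :=
  ∫ y, psiN d N δ ψ y • newtonF d (x - y)

open Classical in
/-- The cut-off function `L^N`. -/
noncomputable def LN (d N : ℕ) (δ : ℝ) (x : EuclideanSpace ℝ (Fin d)) : ℝ :=
  if 6 * (N : ℝ) ^ (-δ) ≤ ‖x‖ then 6 ^ d / ‖x‖ ^ d else (N : ℝ) ^ ((d : ℝ) * δ)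

open MeasureTheory

/-! `L^N` is the rescaling `N^{dδ} L(N^δ ·)` of the fixed profile `L = LN d 1 1`, so
`∫ (L^N)² = N^{2dδ} N^{-dδ} ∫ L² = N^{dδ} ∫ L²`, and `∫ L² < ∞` because `L(z) ≲ (1 + |z|)^{-d}`
is square integrable on `ℝ^d`. The estimate then follows from `∫ K(x - y) ρ(y) dy ≤ ‖K‖₁ ‖ρ‖_∞`. -/

section Holder

variable {α : Type*} [MeasurableSpace α] {μ : Measure α}

theorem integral_mul_le_integral_mul_eLpNorm_top {f g : α → ℝ} (hf : Integrable f μ)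
    (hf0 : 0 ≤ᵐ[μ] f) (hg : MemLp g ⊤ μ) :
    ∫ x, f x * g x ∂μ ≤ (∫ x, f x ∂μ) * (eLpNorm g ⊤ μ).toReal := by
  rw [← integral_mul_const, toReal_eLpNorm hg.aestronglyMeasurable]
  refine integral_mono_ae (hf.mul_of_top_left hg) (hf.mul_const _) ?_
  filter_upwards [hf0, ae_le_lpNorm_exponent_top hg] with x hfx hgx
  exact mul_le_mul_of_nonneg_left ((le_abs_self _).trans hgx) hfx

end Holder

section CutOff

variable {d : ℕ}

theorem measurable_LN (N : ℕ) (δ : ℝ) : Measurable (LN d N δ) := by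
  unfold LN
  exact Measurable.ite (measurableSet_le measurable_const measurable_norm)
    (measurable_const.div (measurable_norm.pow_const d)) measurable_const

theorem LN_one_one (z : EuclideanSpace ℝ (Fin d)) :
    LN d 1 1 z = if (6 : ℝ) ≤ ‖z‖ then 6 ^ d / ‖z‖ ^ d else 1 := by
  simp [LN]

theorem LN_eq_mul_LN_one_one {N : ℕ} (hN : 0 < N) (δ : ℝ) (z : EuclideanSpace ℝ (Fin d)) :
    LN d N δ z = (N : ℝ) ^ ((d : ℝ) * δ) * LN d 1 1 ((N : ℝ) ^ δ • z) := by
  have hN0 : (0 : ℝ) < N := by exact_mod_cast hN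
  set s := (N : ℝ) ^ δ
  have hs : 0 < s := Real.rpow_pos_of_pos hN0 δ
  have hsd : s ^ d = (N : ℝ) ^ ((d : ℝ) * δ) := by
    rw [← Real.rpow_natCast, ← Real.rpow_mul hN0.le, mul_comm δ]
  have hcond : 6 * (N : ℝ) ^ (-δ) ≤ ‖z‖ ↔ 6 ≤ ‖s • z‖ := by
    rw [norm_smul, Real.norm_of_nonneg hs.le, Real.rpow_neg hN0.le, ← div_eq_mul_inv,
      div_le_iff₀ hs, mul_comm]
  rw [LN, LN_one_one, ← hsd]
  by_cases h : 6 ≤ ‖s • z‖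
  · have hz : ‖z‖ ≠ 0 := fun hz => by
      rw [norm_smul, hz, mul_zero] at h; norm_num at h
    rw [if_pos (hcond.mpr h), if_pos h, norm_smul, Real.norm_of_nonneg hs.le, mul_pow]
    field_simp
  · rw [if_neg (mt hcond.mp h), if_neg h, mul_one]

theorem LN_one_one_mul_one_add_norm_pow_le (z : EuclideanSpace ℝ (Fin d)) :
    LN d 1 1 z * (1 + ‖z‖) ^ d ≤ 12 ^ d := by
  rw [LN_one_one]
  split_ifs with h
  · rw [div_mul_eq_mul_div, div_le_iff₀ (by positivity), ← mul_pow, ← mul_pow]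
    exact pow_le_pow_left₀ (by positivity) (by linarith) d
  · rw [one_mul]
    exact pow_le_pow_left₀ (by positivity) (by linarith) d

theorem integrable_LN_one_one_sq (hd : 0 < d) :
    Integrable fun z : EuclideanSpace ℝ (Fin d) => LN d 1 1 z ^ 2 := by
  have hdecay : Integrable fun z : EuclideanSpace ℝ (Fin d) => (1 + ‖z‖) ^ (-(2 * d : ℝ)) :=
    integrable_one_add_norm (by rw [finrank_euclideanSpace_fin]; norm_cast; omega)
  refine (hdecay.const_mul ((12 : ℝ) ^ (2 * d))).mono'
    ((measurable_LN 1 1).pow_const 2).aestronglyMeasurable (.of_forall fun z => ?_)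
  have h1 : (0 : ℝ) < 1 + ‖z‖ := by positivity
  have hL : 0 ≤ LN d 1 1 z := by rw [LN_one_one]; split_ifs <;> positivity
  rw [Real.norm_of_nonneg (by positivity), Real.rpow_neg h1.le, ← div_eq_mul_inv,
    le_div_iff₀ (by positivity), show (2 * d : ℝ) = (2 * d : ℕ) by push_cast; ring,
    Real.rpow_natCast, pow_mul', pow_mul', ← mul_pow]
  exact pow_le_pow_left₀ (by positivity) (LN_one_one_mul_one_add_norm_pow_le z) 2

theorem integrable_LN_sq (hd : 0 < d) {N : ℕ} (hN : 0 < N) (δ : ℝ) :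
    Integrable fun z : EuclideanSpace ℝ (Fin d) => LN d N δ z ^ 2 := by
  simp_rw [LN_eq_mul_LN_one_one hN, mul_pow]
  refine Integrable.const_mul ?_ _
  exact (integrable_comp_smul_iff volume (fun w => LN d 1 1 w ^ 2)
    (Real.rpow_pos_of_pos (by exact_mod_cast hN) δ).ne').mpr (integrable_LN_one_one_sq hd)

theorem integral_LN_sq {N : ℕ} (hN : 0 < N) (δ : ℝ) :
    ∫ z : EuclideanSpace ℝ (Fin d), LN d N δ z ^ 2 =
      (N : ℝ) ^ ((d : ℝ) * δ) * ∫ z : EuclideanSpace ℝ (Fin d), LN d 1 1 z ^ 2 := by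
  have hN0 : (0 : ℝ) < N := by exact_mod_cast hN
  have hsd : ((N : ℝ) ^ δ) ^ d = (N : ℝ) ^ ((d : ℝ) * δ) := by
    rw [← Real.rpow_natCast, ← Real.rpow_mul hN0.le, mul_comm δ]
  have hNd : (N : ℝ) ^ ((d : ℝ) * δ) ≠ 0 := by positivity
  simp_rw [LN_eq_mul_LN_one_one hN, mul_pow]
  rw [integral_const_mul, Measure.integral_comp_smul_of_nonneg volume (fun w => LN d 1 1 w ^ 2)
    _ (hR := (Real.rpow_pos_of_pos hN0 δ).le), smul_eq_mul, finrank_euclideanSpace_fin, hsd]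
  field_simp

end CutOff

/-- Lemma 2.4, second estimate of (2.10): `‖(L^N)² * ρ‖_∞ ≤ C N^{dδ} (‖ρ‖₁ + ‖ρ‖_∞)`
with C depending only on d. -/
theorem stmt4 (d : ℕ) (hd : 2 ≤ d) :
    ∃ C > 0, ∀ N : ℕ, 2 ≤ N → ∀ δ : ℝ, 0 < δ →
      ∀ ρ : EuclideanSpace ℝ (Fin d) → ℝ, Measurable ρ → (∀ y, 0 ≤ ρ y) →
        Integrable ρ → MemLp ρ ⊤ →
        ∀ x : EuclideanSpace ℝ (Fin d),
          ∫ y, (LN d N δ (x - y)) ^ 2 * ρ y ≤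
            C * (N : ℝ) ^ ((d : ℝ) * δ) * ((∫ y, |ρ y|) + (eLpNorm ρ ⊤ volume).toReal) := by
  set A := ∫ z : EuclideanSpace ℝ (Fin d), LN d 1 1 z ^ 2
  have hA : 0 ≤ A := integral_nonneg fun z => sq_nonneg _
  refine ⟨A + 1, by positivity, fun N hN δ _ ρ _ _ _ hρ x => ?_⟩
  have hN0 : 0 < N := by omega
  have hρone : 0 ≤ ∫ y, |ρ y| := integral_nonneg fun y => abs_nonneg _
  have hρtop : 0 ≤ (eLpNorm ρ ⊤ volume).toReal := ENNReal.toReal_nonneg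
  have hNd : 0 ≤ (N : ℝ) ^ ((d : ℝ) * δ) := by positivity
  calc ∫ y, LN d N δ (x - y) ^ 2 * ρ y
      ≤ (∫ y, LN d N δ (x - y) ^ 2) * (eLpNorm ρ ⊤ volume).toReal :=
        integral_mul_le_integral_mul_eLpNorm_top
          ((integrable_LN_sq (by omega) hN0 δ).comp_sub_left x) (.of_forall fun _ => sq_nonneg _) hρ
    _ = (N : ℝ) ^ ((d : ℝ) * δ) * A * (eLpNorm ρ ⊤ volume).toReal := by
        rw [integral_sub_left_eq_self (fun z => LN d N δ z ^ 2), integral_LN_sq hN0]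
    _ ≤ (A + 1) * (N : ℝ) ^ ((d : ℝ) * δ) * ((∫ y, |ρ y|) + (eLpNorm ρ ⊤ volume).toReal) := by
        nlinarith [mul_nonneg (mul_nonneg hNd hA) hρone, mul_nonneg hNd hρone, mul_nonneg hNd hρtop]
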